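/- Commutator with the second-order boundary operator (eq:comtemp4): for every smooth vector field V : ℝ⁴ → ℝ⁴ and all smooth functions s, Θ : ℝ⁴ → ℝ, at every point of ℝ⁴ one has D_V( D_V²Θ − (1/2)(∂^μ s)(∂_μΘ) ) − ( D_V²(D_VΘ) − (1/2)(∂^μ s)(∂_μ(D_VΘ)) ) = (1/2)(∂_λ s)(∂^λ V^ν)(∂_νΘ) + (1/2)(∂_λ s)(∂^ν V^λ)(∂_νΘ) − (1/2)(∂^ν(D_V s))(∂_νΘ), with repeated Greek indices summed over {0,1,2,3} and raised with the Minkowski metric. -/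

import Mathlib

open scoped BigOperators

noncomputable section

/-- Partial derivative `∂_μ` of a real-valued function on `ℝ⁴`. -/
def pd (μ : Fin 4) (f : (Fin 4 → ℝ) → ℝ) : (Fin 4 → ℝ) → ℝ :=
  fun x => fderiv ℝ f x (Pi.single μ 1)

/-- Minkowski metric signs: `msign 0 = −1`, `msign i = 1` for `i = 1,2,3`. -/
def msign (μ : Fin 4) : ℝ := if μ = 0 then -1 else 1

/-- Derivative along the vector field `V` : `D_V f = V^μ ∂_μ f`. -/
def DV (V : (Fin 4 → ℝ) → Fin 4 → ℝ) (f : (Fin 4 → ℝ) → ℝ) : (Fin 4 → ℝ) → ℝ :=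
  fun x => ∑ μ : Fin 4, V x μ * pd μ f x

/-- The d'Alembertian `□f = −∂₀²f + Σᵢ ∂ᵢ²f = m^{μν} ∂_μ∂_ν f`. -/
def dAl (f : (Fin 4 → ℝ) → ℝ) : (Fin 4 → ℝ) → ℝ :=
  fun x => ∑ μ : Fin 4, msign μ * pd μ (pd μ f) x

lemma pd_smooth {f : (Fin 4 → ℝ) → ℝ} (hf : ContDiff ℝ (⊤ : ℕ∞) f) (μ : Fin 4) :
    ContDiff ℝ (⊤ : ℕ∞) (pd μ f) :=
  (hf.fderiv_right (by simp)).clm_apply contDiff_const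

lemma pd_sub {f g : (Fin 4 → ℝ) → ℝ} {x} (hf : DifferentiableAt ℝ f x)
    (hg : DifferentiableAt ℝ g x) (μ : Fin 4) :
    pd μ (fun y => f y - g y) x = pd μ f x - pd μ g x := by
  simp [pd, fderiv_fun_sub hf hg]

lemma pd_const_mul {f : (Fin 4 → ℝ) → ℝ} {x} (hf : DifferentiableAt ℝ f x) (c : ℝ) (μ : Fin 4) :
    pd μ (fun y => c * f y) x = c * pd μ f x := by
  simp [pd, fderiv_const_mul hf c]

lemma pd_mul {f g : (Fin 4 → ℝ) → ℝ} {x} (hf : DifferentiableAt ℝ f x)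
    (hg : DifferentiableAt ℝ g x) (μ : Fin 4) :
    pd μ (fun y => f y * g y) x = pd μ f x * g x + f x * pd μ g x := by
  simp [pd, fderiv_fun_mul hf hg]; ring

lemma pd_sum {F : Fin 4 → (Fin 4 → ℝ) → ℝ} {x} (hF : ∀ μ, DifferentiableAt ℝ (F μ) x)
    (ν : Fin 4) :
    pd ν (fun y => ∑ μ : Fin 4, F μ y) x = ∑ μ : Fin 4, pd ν (F μ) x := by
  simp only [pd]
  rw [fderiv_fun_sum (fun μ _ => hF μ)]
  simp

lemma pd_pd {f : (Fin 4 → ℝ) → ℝ} (hf : ContDiff ℝ (⊤ : ℕ∞) f) (μ ν : Fin 4) (x : Fin 4 → ℝ) :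
    pd μ (pd ν f) x = fderiv ℝ (fderiv ℝ f) x (Pi.single μ 1) (Pi.single ν 1) := by
  have hf' : DifferentiableAt ℝ (fderiv ℝ f) x :=
    ((hf.fderiv_right (m := 1) (WithTop.coe_le_coe.mpr le_top)).differentiable one_ne_zero) x
  have h := (ContinuousLinearMap.apply ℝ ℝ (Pi.single ν 1)).hasFDerivAt.comp x hf'.hasFDerivAt
  have he : pd ν f = (ContinuousLinearMap.apply ℝ ℝ (Pi.single ν 1)) ∘ (fderiv ℝ f) := rfl
  show fderiv ℝ (pd ν f) x (Pi.single μ 1) = _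
  rw [he, h.fderiv]
  simp

lemma pd_comm {f : (Fin 4 → ℝ) → ℝ} (hf : ContDiff ℝ (⊤ : ℕ∞) f) (μ ν : Fin 4) (x : Fin 4 → ℝ) :
    pd μ (pd ν f) x = pd ν (pd μ f) x := by
  rw [pd_pd hf, pd_pd hf]
  exact second_derivative_symmetric
    (fun y => ((hf.differentiable (by simp)) y).hasFDerivAt)
    (((hf.fderiv_right (m := 1) (WithTop.coe_le_coe.mpr le_top)).differentiable one_ne_zero) x).hasFDerivAt _ _

lemma DV_smooth {V : (Fin 4 → ℝ) → Fin 4 → ℝ} {f : (Fin 4 → ℝ) → ℝ}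
    (hV : ContDiff ℝ (⊤ : ℕ∞) V) (hf : ContDiff ℝ (⊤ : ℕ∞) f) : ContDiff ℝ (⊤ : ℕ∞) (DV V f) := by
  unfold DV
  exact ContDiff.sum fun μ _ => (contDiff_pi.mp hV μ).mul (pd_smooth hf μ)

lemma pd_DV {V : (Fin 4 → ℝ) → Fin 4 → ℝ} {f : (Fin 4 → ℝ) → ℝ}
    (hV : ContDiff ℝ (⊤ : ℕ∞) V) (hf : ContDiff ℝ (⊤ : ℕ∞) f) (μ : Fin 4) (x : Fin 4 → ℝ) :
    pd μ (DV V f) x = (∑ ν : Fin 4, V x ν * pd ν (pd μ f) x)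
      + ∑ ν : Fin 4, pd μ (fun y => V y ν) x * pd ν f x := by
  have hVν : ∀ ν, ContDiff ℝ (⊤ : ℕ∞) (fun y => V y ν) := fun ν => contDiff_pi.mp hV ν
  unfold DV
  rw [pd_sum (F := fun ν y => V y ν * pd ν f y) (fun ν => (((hVν ν).differentiable (by simp) x).mul
      (((pd_smooth hf ν).differentiable (by simp)) x))) μ]
  rw [← Finset.sum_add_distrib]
  refine Finset.sum_congr rfl fun ν _ => ?_
  rw [pd_mul ((hVν ν).differentiable (by simp) x) (((pd_smooth hf ν).differentiable (by simp)) x)]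
  rw [pd_comm hf μ ν]
  ring

/-- Commutator with the second-order boundary operator (eq:comtemp4):
`D_V(D_V²Θ − ½(∂^μs)(∂_μΘ)) − (D_V²(D_VΘ) − ½(∂^μs)(∂_μ(D_VΘ)))
  = ½(∂_λs)(∂^λV^ν)(∂_νΘ) + ½(∂_λs)(∂^νV^λ)(∂_νΘ) − ½(∂^ν(D_Vs))(∂_νΘ)`. -/
theorem commutator_boundary_operator
    (V : (Fin 4 → ℝ) → Fin 4 → ℝ) (s Θ : (Fin 4 → ℝ) → ℝ)
    (hV : ContDiff ℝ (⊤ : ℕ∞) V) (hs : ContDiff ℝ (⊤ : ℕ∞) s) (hΘ : ContDiff ℝ (⊤ : ℕ∞) Θ)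
    (x : Fin 4 → ℝ) :
    DV V (fun y => DV V (DV V Θ) y
        - (1 / 2) * ∑ μ : Fin 4, (msign μ * pd μ s y) * pd μ Θ y) x
      - (DV V (DV V (DV V Θ)) x
        - (1 / 2) * ∑ μ : Fin 4, (msign μ * pd μ s x) * pd μ (DV V Θ) x)
      = (1 / 2) * (∑ lam : Fin 4, ∑ ν : Fin 4,
            pd lam s x * (msign lam * pd lam (fun y => V y ν) x) * pd ν Θ x)
        + (1 / 2) * (∑ lam : Fin 4, ∑ ν : Fin 4,
            pd lam s x * (msign ν * pd ν (fun y => V y lam) x) * pd ν Θ x)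
        - (1 / 2) * ∑ ν : Fin 4, (msign ν * pd ν (DV V s) x) * pd ν Θ x := by
  set Q : (Fin 4 → ℝ) → ℝ := fun y => ∑ μ : Fin 4, (msign μ * pd μ s y) * pd μ Θ y with hQdef
  have hDΘ : ContDiff ℝ (⊤ : ℕ∞) (DV V Θ) := DV_smooth hV hΘ
  have hDDΘ : ContDiff ℝ (⊤ : ℕ∞) (DV V (DV V Θ)) := DV_smooth hV hDΘ
  have hQmem : ∀ μ : Fin 4, ContDiff ℝ (⊤ : ℕ∞)
      (fun y => (msign μ * pd μ s y) * pd μ Θ y) :=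
    fun μ => (contDiff_const.mul (pd_smooth hs μ)).mul (pd_smooth hΘ μ)
  have hQ : ContDiff ℝ (⊤ : ℕ∞) Q := ContDiff.sum fun μ _ => hQmem μ
  have hpdQ : ∀ ν : Fin 4, pd ν Q x = ∑ μ : Fin 4,
      (msign μ * pd ν (pd μ s) x * pd μ Θ x
        + (msign μ * pd μ s x) * pd ν (pd μ Θ) x) := by
    intro ν
    rw [hQdef, pd_sum (fun μ => (hQmem μ).differentiable (by simp) x)]
    refine Finset.sum_congr rfl fun μ _ => ?_
    rw [pd_mul ((contDiff_const.mul (pd_smooth hs μ)).differentiable (by simp) x)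
        ((pd_smooth hΘ μ).differentiable (by simp) x),
      pd_const_mul ((pd_smooth hs μ).differentiable (by simp) x)]
  have key : DV V (fun y => DV V (DV V Θ) y - (1/2) * Q y) x
      = DV V (DV V (DV V Θ)) x - (1/2) * ∑ ν : Fin 4, V x ν * pd ν Q x := by
    have hp : ∀ ν : Fin 4, pd ν (fun y => DV V (DV V Θ) y - (1/2) * Q y) x
        = pd ν (DV V (DV V Θ)) x - (1/2) * pd ν Q x := by
      intro ν
      rw [pd_sub (hDDΘ.differentiable (by simp) x)
          ((contDiff_const.mul hQ).differentiable (by simp) x),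
        pd_const_mul (hQ.differentiable (by simp) x)]
    show ∑ ν : Fin 4, V x ν * pd ν (fun y => DV V (DV V Θ) y - (1/2) * Q y) x = _
    simp only [hp]
    rw [show DV V (DV V (DV V Θ)) x
        = ∑ ν : Fin 4, V x ν * pd ν (DV V (DV V Θ)) x from rfl]
    rw [Finset.mul_sum, ← Finset.sum_sub_distrib]
    exact Finset.sum_congr rfl fun ν _ => by ring
  rw [key]
  simp only [hpdQ, pd_DV hV hΘ, pd_DV hV hs]
  simp only [Fin.sum_univ_four]
  ring
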